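/- arXiv:math/0612679 — 3 statements merged into one kernel-verified Lean document; each statement's English description precedes it below -/
import Mathlib

section
/- Let a ≥ 3 be an odd integer and s a positive integer. Let X be the edge set of the graph on vertex set ZMod (sa+2) whose edges are the pairs {v, v + s(a−1)/2 + j} for v ∈ ZMod (sa+2) and j = 1, …, s+1 (this graph realizes the generalized cluster complex Δ^s(I₂(a)), and its edges are the facets). For every divisor d ≥ 1 of sa+2 and every primitive d-th root of unity ω ∈ ℂ, the number of edges {u,v} ∈ X with {u + (sa+2)/d, v + (sa+2)/d} = {u, v} equals the limit, as the complex variable q tends to ω within ℂ ∖ {ω}, of ([sa+2]_q / [2]_q) · ([sa+a]_q / [a]_q). (That is, X, this q-analogue, and the rotation action of ZMod (sa+2) exhibit the cyclic sieving phenomenon.) -/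
open Filter Topology

/-- The q-integer `[m]_q = 1 + q + ... + q^(m-1)`. -/
noncomputable def qInt (q : ℂ) (m : ℕ) : ℂ := ∑ i ∈ Finset.range m, q ^ i

/-- The Gaussian binomial coefficient `[[m, k]]` as a polynomial over ℂ,
defined by the Pascal recurrence `[[m+1, k+1]] = [[m, k]] + q^(k+1)·[[m, k+1]]`;
it is the unique polynomial with `[[m,k]]·[k]!_q·[m−k]!_q = [m]!_q` for `0 ≤ k ≤ m`,
and it vanishes for `k > m`. -/
noncomputable def gbPoly : ℕ → ℕ → Polynomial ℂ
  | _, 0 => 1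
  | 0, _ + 1 => 0
  | m + 1, k + 1 => gbPoly m k + Polynomial.X ^ (k + 1) * gbPoly m (k + 1)

/-- Evaluation of the Gaussian binomial `[[m, k]]` at `q : ℂ`. -/
noncomputable def gb (m k : ℕ) (q : ℂ) : ℂ := (gbPoly m k).eval q

/-- Gaussian binomial with integer lower index (zero for negative lower index). -/
noncomputable def gbZ (m : ℕ) (k : ℤ) (q : ℂ) : ℂ := if 0 ≤ k then gb m k.toNat q else 0

/-- Binomial coefficient with integer lower index (zero for negative lower index). -/
def chooseZ (a : ℕ) (b : ℤ) : ℕ := if 0 ≤ b then a.choose b.toNat else 0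

/-- `x` lies strictly inside the open counterclockwise arc from `a` to `b`. -/
def InArc {N : ℕ} (a b x : ZMod N) : Prop :=
  0 < (x - a).val ∧ (x - a).val < (b - a).val

/-- An unordered pair of vertices of the `N`-gon is a diagonal. -/
def IsDiagonal {N : ℕ} (D : Sym2 (ZMod N)) : Prop :=
  ∃ a b : ZMod N, D = Sym2.mk a b ∧ b ≠ a ∧ b ≠ a + 1 ∧ b ≠ a - 1

/-- Two chords cross: exactly one endpoint of the second lies in the open arc
from `a` to `b`, the other in the open arc from `b` to `a`. -/
def Crosses {N : ℕ} (D E : Sym2 (ZMod N)) : Prop :=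
  ∃ a b c d : ZMod N, D = Sym2.mk a b ∧ E = Sym2.mk c d ∧
    InArc a b c ∧ InArc b a d

/-- A diagonal `{a,b}` is `s`-divisible: the representative of `b − a` is ≡ 1 (mod s). -/
def SDivisible (s : ℕ) {N : ℕ} (D : Sym2 (ZMod N)) : Prop :=
  ∃ a b : ZMod N, D = Sym2.mk a b ∧ (b - a).val % s = 1 % s

/-- Rotation of a chord by `r`. -/
def rotChord {N : ℕ} (r : ZMod N) (D : Sym2 (ZMod N)) : Sym2 (ZMod N) :=
  Sym2.map (· + r) D

/-- An `s`-divisible dissection of the `N`-gon using `k` noncrossing diagonals. -/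
def IsDissection (s N k : ℕ) (π : Finset (Sym2 (ZMod N))) : Prop :=
  π.card = k ∧ (∀ D ∈ π, IsDiagonal D ∧ SDivisible s D) ∧
    ∀ D ∈ π, ∀ E ∈ π, D ≠ E → ¬ Crosses D E

/-- Rotation of a dissection by `r`. -/
def rotDissection {N : ℕ} (r : ZMod N) (π : Finset (Sym2 (ZMod N))) :
    Finset (Sym2 (ZMod N)) := π.image (rotChord r)

/-- A diameter of the `(2sn+2)`-gon. -/
def IsDiameter (s n : ℕ) (D : Sym2 (ZMod (2*s*n+2))) : Prop :=
  ∃ a : ZMod (2*s*n+2), D = Sym2.mk a (a + ((s*n+1 : ℕ) : ZMod (2*s*n+2)))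

/-- Antipodal copy of a chord in the `(2sn+2)`-gon. -/
def antipodal (s n : ℕ) (D : Sym2 (ZMod (2*s*n+2))) : Sym2 (ZMod (2*s*n+2)) :=
  rotChord ((s*n+1 : ℕ) : ZMod (2*s*n+2)) D

/-- A B-diagonal: a diameter, or a non-diameter `s`-divisible diagonal together
with its antipodal copy. -/
def IsBDiagonal (s n : ℕ) (B : Finset (Sym2 (ZMod (2*s*n+2)))) : Prop :=
  (∃ D, IsDiameter s n D ∧ B = {D}) ∨
  (∃ D, IsDiagonal D ∧ SDivisible s D ∧ ¬ IsDiameter s n D ∧ B = {D, antipodal s n D})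

/-- A `k`-element set of pairwise noncrossing B-diagonals. -/
def IsBFace (s n k : ℕ) (π : Finset (Finset (Sym2 (ZMod (2*s*n+2))))) : Prop :=
  π.card = k ∧ (∀ B ∈ π, IsBDiagonal s n B) ∧
    ∀ B₁ ∈ π, ∀ B₂ ∈ π, ∀ D ∈ B₁, ∀ E ∈ B₂, D ≠ E → ¬ Crosses D E

/-- Rotation of a set of B-diagonals by `r`. -/
def rotBFace (s n : ℕ) (r : ZMod (2*s*n+2)) (π : Finset (Finset (Sym2 (ZMod (2*s*n+2))))) :
    Finset (Finset (Sym2 (ZMod (2*s*n+2)))) := π.image (fun B => B.image (rotChord r))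

/-- The edges of a graph on the vertices of the `N`-gon are pairwise noncrossing chords. -/
def NoncrossingEdges {N : ℕ} (G : SimpleGraph (ZMod N)) : Prop :=
  ∀ e ∈ G.edgeSet, ∀ f ∈ G.edgeSet, e ≠ f → ¬ Crosses e f

/-- Rotation of a graph on `ZMod N` by `r`. -/
def rotGraph {N : ℕ} (r : ZMod N) (G : SimpleGraph (ZMod N)) : SimpleGraph (ZMod N) :=
  G.map (Equiv.addRight r).toEmbedding

-- aux section (to be concatenated after original defs)
section Aux

lemma qInt_continuous (m : ℕ) : Continuous fun q : ℂ => qInt q m := by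
  unfold qInt; exact continuous_finset_sum _ fun i _ => continuous_pow i

lemma qInt_one (m : ℕ) : qInt 1 m = m := by simp [qInt]

lemma qInt_eq {q : ℂ} (hq : q ≠ 1) (m : ℕ) : qInt q m = (q ^ m - 1) / (q - 1) :=
  geom_sum_eq hq m

lemma qInt_two (q : ℂ) : qInt q 2 = 1 + q := by
  simp [qInt, Finset.sum_range_succ]

lemma qInt_neg_one (m : ℕ) : qInt (-1 : ℂ) m = if Even m then 0 else 1 := by
  rw [qInt_eq (by norm_num) m]
  rcases Nat.even_or_odd m with h | h
  · rw [h.neg_one_pow]; simp [h]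
  · rw [h.neg_one_pow]; rw [if_neg (by simpa [Nat.odd_iff, Nat.even_iff] using h)]
    norm_num

lemma qInt_double (q : ℂ) (k : ℕ) : qInt q (2 * k) = qInt (q ^ 2) k * qInt q 2 := by
  induction k with
  | zero => simp [qInt]
  | succ n ih =>
      have h1 : 2 * (n + 1) = (2 * n) + 1 + 1 := by ring
      rw [h1]
      rw [show qInt q (2*n+1+1) = qInt q (2*n) + q^(2*n) + q^(2*n+1) by
            simp [qInt, Finset.sum_range_succ],
          show qInt (q^2) (n+1) = qInt (q^2) n + (q^2)^n by
            simp [qInt, Finset.sum_range_succ],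
          ih, qInt_two, ← pow_mul]
      ring

lemma card_image_two_to_one {α β : Type*} [DecidableEq α] [DecidableEq β]
    (D : Finset α) (F : α → β) (ι : α → α)
    (hιD : ∀ p ∈ D, ι p ∈ D) (hne : ∀ p ∈ D, ι p ≠ p) (hFι : ∀ p ∈ D, F (ι p) = F p)
    (hinj : ∀ p ∈ D, ∀ p' ∈ D, F p = F p' → p' = p ∨ p' = ι p) :
    2 * (D.image F).card = D.card := by
  rw [Finset.card_eq_sum_card_image F D, Finset.sum_congr rfl
    (g := fun _ => 2), Finset.sum_const, smul_eq_mul, mul_comm]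
  intro b hb
  obtain ⟨p, hp, hpb⟩ := Finset.mem_image.mp hb
  have hfil : D.filter (fun q => F q = b) = {p, ι p} := by
    ext q
    simp only [Finset.mem_filter, Finset.mem_insert, Finset.mem_singleton]
    constructor
    · rintro ⟨hq, hFq⟩
      exact hinj p hp q hq (by rw [hpb, hFq])
    · rintro (rfl | rfl)
      · exact ⟨hp, hpb⟩
      · exact ⟨hιD p hp, by rw [hFι p hp, hpb]⟩
  rw [hfil, Finset.card_insert_of_notMem (by simp [Ne.symm (hne p hp)]),
    Finset.card_singleton]

lemma cast_inj_of_lt {N x y : ℕ} (hx : x < N) (hy : y < N) (h : (x : ZMod N) = y) :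
    x = y := by
  rw [ZMod.natCast_eq_natCast_iff'] at h
  rwa [Nat.mod_eq_of_lt hx, Nat.mod_eq_of_lt hy] at h

lemma cast_ne_zero_of {N z : ℕ} (h0 : 0 < z) (hz : z < N) : (z : ZMod N) ≠ 0 := by
  intro h
  rw [ZMod.natCast_eq_zero_iff] at h
  exact absurd (Nat.le_of_dvd h0 h) (by omega)

lemma dvd_window {N z : ℕ} (h : N ∣ z) (h0 : 0 < z) (hz : z < 2 * N) : z = N := by
  obtain ⟨k, rfl⟩ := h
  have hN : 0 < N := by
    rcases Nat.eq_zero_or_pos N with h | h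
    · subst h; simp at h0
    · exact h
  have : k < 2 := by
    by_contra hk
    push_neg at hk
    have : N * 2 ≤ N * k := Nat.mul_le_mul_left N hk
    omega
  interval_cases k <;> omega

lemma two_mul_card_X (s t N : ℕ) [NeZero N] (hN : N = 2*(s*t)+s+2) :
    2 * (((Finset.univ : Finset (ZMod N)) ×ˢ Finset.Icc 1 (s+1)).image
      (fun p : ZMod N × ℕ => Sym2.mk p.1 (p.1 + ((s*t + p.2 : ℕ) : ZMod N)))).card
    = N * (s + 1) := by
  have hb : ∀ j, 1 ≤ j → j ≤ s + 1 → 0 < s*t + j ∧ s*t + j < N := by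
    intro j h1 h2
    omega
  rw [card_image_two_to_one _ _
      (fun p => (p.1 + ((s*t + p.2 : ℕ) : ZMod N), s + 2 - p.2))]
  · rw [Finset.card_product, Finset.card_univ, ZMod.card, Nat.card_Icc]; norm_num
  · rintro ⟨v, j⟩ hp
    simp only [Finset.mem_product, Finset.mem_Icc, Finset.mem_univ, true_and] at hp ⊢
    omega
  · rintro ⟨v, j⟩ hp h
    simp only [Finset.mem_product, Finset.mem_Icc, Finset.mem_univ, true_and] at hp
    have h1 := congrArg Prod.fst h
    simp only [add_eq_left] at h1
    exact cast_ne_zero_of (hb j hp.1 hp.2).1 (hb j hp.1 hp.2).2 h1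
  · rintro ⟨v, j⟩ hp
    simp only [Finset.mem_product, Finset.mem_Icc, Finset.mem_univ, true_and] at hp
    have hz : ((s*t + j : ℕ) : ZMod N) + ((s*t + (s + 2 - j) : ℕ) : ZMod N) = 0 := by
      rw [← Nat.cast_add, show s*t + j + (s*t + (s + 2 - j)) = N by omega,
        ZMod.natCast_self]
    dsimp only
    rw [Sym2.eq_swap]
    congr 1
    rw [add_assoc, hz, add_zero]
  · rintro ⟨v, j⟩ hp ⟨v', j'⟩ hp' h
    simp only [Finset.mem_product, Finset.mem_Icc, Finset.mem_univ, true_and] at hp hp'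
    rw [Sym2.eq_iff] at h
    rcases h with ⟨h1, h2⟩ | ⟨h1, h2⟩
    · left
      subst h1
      have := add_left_cancel h2
      have hj : j = j' := by
        have := cast_inj_of_lt (hb j hp.1 hp.2).2 (hb j' hp'.1 hp'.2).2 this
        omega
      rw [hj]
    · right
      have hz : ((s*t + j : ℕ) : ZMod N) + ((s*t + j' : ℕ) : ZMod N) = 0 := by
        have : v + (((s*t + j : ℕ) : ZMod N) + ((s*t + j' : ℕ) : ZMod N)) = v := by
          rw [← add_assoc, h2, ← h1]
        exact (add_eq_left).mp (by rwa [add_comm] at this)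
      rw [← Nat.cast_add, ZMod.natCast_eq_zero_iff] at hz
      have heq : s*t + j + (s*t + j') = N :=
        dvd_window hz (by omega) (by have := hb j hp.1 hp.2; have := hb j' hp'.1 hp'.2; omega)
      have hj' : j' = s + 2 - j := by omega
      have hv' : v' = v + ((s*t + j : ℕ) : ZMod N) := h2.symm
      rw [Prod.ext_iff]
      exact ⟨hv', hj'⟩

lemma two_mul_card_diam (N : ℕ) [NeZero N] (h2 : 2 * (N/2) = N) (hN : 2 < N) :
    2 * ((Finset.univ : Finset (ZMod N)).image
      (fun u => Sym2.mk u (u + ((N/2 : ℕ) : ZMod N)))).card = N := by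
  have hc : ((N/2 : ℕ) : ZMod N) ≠ 0 := cast_ne_zero_of (by omega) (by omega)
  have hcc : ((N/2 : ℕ) : ZMod N) + ((N/2 : ℕ) : ZMod N) = 0 := by
    rw [← Nat.cast_add, show N/2 + N/2 = N by omega, ZMod.natCast_self]
  rw [card_image_two_to_one _ _ (fun u => u + ((N/2 : ℕ) : ZMod N))]
  · rw [Finset.card_univ, ZMod.card]
  · intros; exact Finset.mem_univ _
  · intro u _ h
    exact hc ((add_eq_left).mp h)
  · intro u _
    rw [Sym2.eq_swap]
    congr 1
    rw [add_assoc, hcc, add_zero]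
  · intro u _ u' _ h
    rw [Sym2.eq_iff] at h
    rcases h with ⟨h1, _⟩ | ⟨h1, h2⟩
    · exact Or.inl h1.symm
    · exact Or.inr h2.symm

lemma tendsto_aux (M K L : ℕ) (ω : ℂ) (h2 : qInt ω 2 ≠ 0) (hL : qInt ω L ≠ 0) :
    Filter.Tendsto (fun q : ℂ => (qInt q M / qInt q 2) * (qInt q K / qInt q L)) (𝓝[≠] ω)
      (𝓝 ((qInt ω M / qInt ω 2) * (qInt ω K / qInt ω L))) := by
  apply Filter.Tendsto.mono_left _ nhdsWithin_le_nhds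
  exact (((qInt_continuous M).continuousAt.div (qInt_continuous 2).continuousAt h2).mul
    ((qInt_continuous K).continuousAt.div (qInt_continuous L).continuousAt hL)).tendsto

lemma tendsto_aux2 (M K L : ℕ) (hM : 2 * (M/2) = M) (hL : qInt (-1 : ℂ) L ≠ 0) :
    Filter.Tendsto (fun q : ℂ => (qInt q M / qInt q 2) * (qInt q K / qInt q L))
      (𝓝[≠] (-1 : ℂ))
      (𝓝 (((M/2 : ℕ) : ℂ) * (qInt (-1) K / qInt (-1) L))) := by
  have hg : Filter.Tendsto (fun q : ℂ => qInt (q^2) (M/2) * (qInt q K / qInt q L))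
      (𝓝 (-1 : ℂ))
      (𝓝 (qInt ((-1:ℂ)^2) (M/2) * (qInt (-1) K / qInt (-1) L))) :=
    ((((qInt_continuous (M/2)).comp (continuous_pow 2)).continuousAt).mul
      ((qInt_continuous K).continuousAt.div (qInt_continuous L).continuousAt hL)).tendsto
  rw [show ((-1:ℂ)^2) = 1 by norm_num, qInt_one] at hg
  refine Filter.Tendsto.congr' ?_ (hg.mono_left nhdsWithin_le_nhds)
  filter_upwards [eventually_mem_nhdsWithin] with q hq
  have hq' : (q : ℂ) ≠ -1 := hq
  have h2 : qInt q 2 ≠ 0 := by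
    rw [qInt_two]
    intro h
    exact hq' (by linear_combination h)
  have hid : qInt q M = qInt (q^2) (M/2) * qInt q 2 := by
    conv_lhs => rw [← hM]
    rw [qInt_double]
  rw [hid, mul_div_cancel_right₀ _ h2]

lemma cast_val_d1 (n s' a' k : ℕ) (ha' : 0 < a') (h : 2 * k = n * (s' + 1)) :
    ((k : ℕ) : ℂ) = ((n : ℕ) : ℂ) / ((2:ℕ):ℂ) * (((s'*a' + a' : ℕ) : ℂ) / ((a' : ℕ) : ℂ)) := by
  have h2 : ((2:ℕ):ℂ) ≠ 0 := by norm_num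
  have ha0 : ((a' : ℕ) : ℂ) ≠ 0 := Nat.cast_ne_zero.mpr (by omega)
  rw [div_mul_div_comm, eq_div_iff (mul_ne_zero h2 ha0)]
  have hc := congrArg (fun m : ℕ => (m : ℂ)) h
  push_cast at hc ⊢
  linear_combination (a' : ℂ) * hc

end Aux

/-- The cyclic sieving phenomenon for the facets of `Δ^s(I₂(a))`, `a` odd:
`X` is the edge set of the graph on `ZMod (sa+2)` joining each `v` to
`v + s(a−1)/2 + j` for `j = 1, …, s+1`; the number of edges fixed by the rotation by
`(sa+2)/d` equals the limit at a primitive `d`-th root of unity of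
`([sa+2]_q/[2]_q)·([sa+a]_q/[a]_q)`. -/
theorem stmt3 (a s d : ℕ) (ha : 3 ≤ a) (haodd : Odd a) (hs : 0 < s)
    (hd : 1 ≤ d) (hdvd : d ∣ (s * a + 2)) (ω : ℂ)
    (hω1 : ω ^ d = 1) (hω2 : ∀ e : ℕ, 0 < e → e < d → ω ^ e ≠ 1) :
    Filter.Tendsto
      (fun q : ℂ => (qInt q (s * a + 2) / qInt q 2) * (qInt q (s * a + a) / qInt q a))
      (𝓝[≠] ω)
      (𝓝 ((Set.ncard {e : Sym2 (ZMod (s * a + 2)) |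
            (∃ v : ZMod (s * a + 2), ∃ j : ℕ, 1 ≤ j ∧ j ≤ s + 1 ∧
              e = Sym2.mk v (v + ((s * ((a - 1) / 2) + j : ℕ) : ZMod (s * a + 2)))) ∧
            rotChord ((((s * a + 2) / d : ℕ)) : ZMod (s * a + 2)) e = e} : ℕ) : ℂ)) := by
  obtain ⟨t, rfl⟩ := haodd
  have ht : 1 ≤ t := by omega
  simp only [show (2*t+1-1)/2 = t from by omega]
  set N := s * (2*t+1) + 2 with hNdef
  have hN2 : N = 2*(s*t) + s + 2 := by rw [hNdef]; ring
  haveI : NeZero N := ⟨by omega⟩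
  have hmjlt : ∀ j, 1 ≤ j → j ≤ s + 1 → 0 < s*t + j ∧ s*t + j < N := by
    intro j h1 h2; omega
  have haodd' : ¬ Even (2*t+1) := by rw [Nat.even_iff]; omega
  rcases Nat.lt_or_ge d 3 with hd3 | hd3
  · interval_cases d
    · -- d = 1
      rw [pow_one] at hω1
      subst hω1
      have hrot : ∀ e : Sym2 (ZMod N), rotChord ((N/1 : ℕ) : ZMod N) e = e := by
        intro e
        rw [show ((N/1 : ℕ) : ZMod N) = 0 by rw [Nat.div_one, ZMod.natCast_self]]
        unfold rotChord
        rw [show (fun x : ZMod N => x + 0) = id from funext fun x => add_zero x,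
          Sym2.map_id, id_eq]
      have hset : {e : Sym2 (ZMod N) |
            (∃ v : ZMod N, ∃ j : ℕ, 1 ≤ j ∧ j ≤ s + 1 ∧
              e = Sym2.mk v (v + ((s * t + j : ℕ) : ZMod N))) ∧
            rotChord (((N / 1 : ℕ)) : ZMod N) e = e}
          = ↑(((Finset.univ : Finset (ZMod N)) ×ˢ Finset.Icc 1 (s+1)).image
              (fun p : ZMod N × ℕ => Sym2.mk p.1 (p.1 + ((s*t + p.2 : ℕ) : ZMod N)))) := by
        ext e
        simp only [Set.mem_setOf_eq, hrot, and_true, Finset.coe_image, Set.mem_image,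
          Finset.mem_coe, Finset.mem_product, Finset.mem_Icc, Finset.mem_univ, true_and,
          Prod.exists]
        constructor
        · rintro ⟨v, j, h1, h2, rfl⟩
          exact ⟨v, j, ⟨h1, h2⟩, rfl⟩
        · rintro ⟨v, j, ⟨h1, h2⟩, rfl⟩
          exact ⟨v, j, h1, h2, rfl⟩
      rw [hset, Set.ncard_coe_finset]
      have hcard := two_mul_card_X s t N hN2
      have h2' : qInt 1 2 ≠ 0 := by rw [qInt_one]; norm_num
      have hL' : qInt 1 (2*t+1) ≠ 0 := by
        rw [qInt_one]; exact Nat.cast_ne_zero.mpr (by omega)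
      have key := tendsto_aux N (s*(2*t+1)+(2*t+1)) (2*t+1) 1 h2' hL'
      convert key using 2
      rw [qInt_one, qInt_one, qInt_one, qInt_one]
      exact cast_val_d1 N s (2*t+1) _ (by omega) hcard
    · -- d = 2
      have hse : 2 ∣ s := by omega
      have hωm1 : ω = -1 := by
        have h := hω2 1 one_pos (by omega)
        rw [pow_one] at h
        have hfac : (ω - 1) * (ω + 1) = 0 := by linear_combination hω1
        rcases mul_eq_zero.mp hfac with h1 | h1
        · exact absurd (by linear_combination h1) h
        · linear_combination h1
      subst hωm1
      have hc0 : ((N/2 : ℕ) : ZMod N) ≠ 0 := cast_ne_zero_of (by omega) (by omega)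
      have hcc : ((N/2 : ℕ) : ZMod N) + ((N/2 : ℕ) : ZMod N) = 0 := by
        rw [← Nat.cast_add, show N/2 + N/2 = N by omega, ZMod.natCast_self]
      have hset : {e : Sym2 (ZMod N) |
            (∃ v : ZMod N, ∃ j : ℕ, 1 ≤ j ∧ j ≤ s + 1 ∧
              e = Sym2.mk v (v + ((s * t + j : ℕ) : ZMod N))) ∧
            rotChord (((N / 2 : ℕ)) : ZMod N) e = e}
          = ↑((Finset.univ : Finset (ZMod N)).image
              (fun u => Sym2.mk u (u + ((N/2 : ℕ) : ZMod N)))) := by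
        ext e
        simp only [Set.mem_setOf_eq, Finset.coe_image, Set.mem_image, Finset.mem_coe,
          Finset.mem_univ, true_and, Finset.coe_univ, Set.image_univ, Set.mem_range]
        constructor
        · rintro ⟨⟨v, j, h1, h2, rfl⟩, hfix⟩
          simp only [rotChord, Sym2.map_pair_eq, Sym2.eq_iff] at hfix
          rcases hfix with ⟨hA, -⟩ | ⟨hA, -⟩
          · exact absurd (add_eq_left.mp hA) hc0
          · exact ⟨v, by rw [add_left_cancel hA]⟩
        · rintro ⟨u, rfl⟩
          refine ⟨⟨u, s/2+1, by omega, by omega, ?_⟩, ?_⟩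
          · rw [show s*t + (s/2+1) = N/2 from by omega]
          · simp only [rotChord, Sym2.map_pair_eq]
            rw [add_assoc, hcc, add_zero, Sym2.eq_swap]
      rw [hset, Set.ncard_coe_finset]
      have hcard := two_mul_card_diam N (by omega) (by omega)
      have hLo : qInt (-1 : ℂ) (2*t+1) ≠ 0 := by
        rw [qInt_neg_one, if_neg haodd']; norm_num
      have key := tendsto_aux2 N (s*(2*t+1)+(2*t+1)) (2*t+1) (by omega) hLo
      have hKodd : ¬ Even (s*(2*t+1)+(2*t+1)) := by
        intro h
        rw [Nat.even_add] at h
        exact haodd' (h.mp (Nat.even_mul.mpr (Or.inl ((Nat.even_iff).mpr (by omega)))))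
      rw [qInt_neg_one (s*(2*t+1)+(2*t+1)), if_neg hKodd, qInt_neg_one (2*t+1),
        if_neg haodd', div_one, mul_one] at key
      have hcd : ((Finset.univ : Finset (ZMod N)).image
          (fun u => Sym2.mk u (u + ((N/2 : ℕ) : ZMod N)))).card = N/2 := by omega
      rw [hcd]
      exact key
  · -- d ≥ 3
    have hω1' : ω ≠ 1 := by
      have h := hω2 1 one_pos (by omega)
      rwa [pow_one] at h
    have hωm1 : ω ≠ -1 := by
      intro h
      exact hω2 2 (by norm_num) (by omega) (by rw [h]; norm_num)
    have h2' : qInt ω 2 ≠ 0 := by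
      rw [qInt_two]
      intro h
      exact hωm1 (by linear_combination h)
    have hωN : ω ^ N = 1 := by
      obtain ⟨k, hk⟩ := hdvd
      rw [hk, pow_mul, hω1, one_pow]
    have hL' : qInt ω (2*t+1) ≠ 0 := by
      rw [qInt_eq hω1']
      intro h
      rcases div_eq_zero_iff.mp h with h1 | h1
      · have hωa : ω ^ (2*t+1) = 1 := by linear_combination h1
        have hω2' : ω ^ 2 = 1 := by
          have h5 : ω ^ N = ω ^ 2 := by
            rw [hNdef, pow_add, mul_comm s, pow_mul, hωa, one_pow, one_mul]
          rw [← h5, hωN]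
        exact hω2 2 (by norm_num) (by omega) hω2'
      · exact hω1' (by linear_combination h1)
    have hqN : qInt ω N = 0 := by
      rw [qInt_eq hω1', hωN, sub_self, zero_div]
    have hc0 : ((N/d : ℕ) : ZMod N) ≠ 0 :=
      cast_ne_zero_of (Nat.div_pos (Nat.le_of_dvd (by omega) hdvd) (by omega))
        (Nat.div_lt_self (by omega) (by omega))
    have hNd' : d * (N/d) = N := by rw [mul_comm]; exact Nat.div_mul_cancel hdvd
    have h2c : ((N/d : ℕ) : ZMod N) + ((N/d : ℕ) : ZMod N) ≠ 0 := by
      intro h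
      rw [← Nat.cast_add, ZMod.natCast_eq_zero_iff] at h
      have hpos : 0 < N/d := Nat.div_pos (Nat.le_of_dvd (by omega) hdvd) (by omega)
      have hle := Nat.le_of_dvd (by omega) h
      have h3 : 3 * (N/d) ≤ d * (N/d) := Nat.mul_le_mul_right _ hd3
      omega
    have hset : {e : Sym2 (ZMod N) |
            (∃ v : ZMod N, ∃ j : ℕ, 1 ≤ j ∧ j ≤ s + 1 ∧
              e = Sym2.mk v (v + ((s * t + j : ℕ) : ZMod N))) ∧
            rotChord (((N / d : ℕ)) : ZMod N) e = e} = ∅ := by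
      ext e
      simp only [Set.mem_setOf_eq, Set.mem_empty_iff_false, iff_false, not_and]
      rintro ⟨v, j, h1, h2, rfl⟩ hfix
      simp only [rotChord, Sym2.map_pair_eq, Sym2.eq_iff] at hfix
      rcases hfix with ⟨hA, -⟩ | ⟨hA, hB⟩
      · exact hc0 (add_eq_left.mp hA)
      · apply h2c
        have hx : ((s*t + j : ℕ) : ZMod N) = ((N/d : ℕ) : ZMod N) := (add_left_cancel hA).symm
        rw [hx] at hB
        rw [add_assoc] at hB
        exact (add_eq_left.mp hB)
    rw [hset, Set.ncard_empty, Nat.cast_zero]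
    have key := tendsto_aux N (s*(2*t+1)+(2*t+1)) (2*t+1) ω h2' hL'
    rw [hqN, zero_div, zero_mul] at key
    exact key
end

section
/- Let a ≥ 4 be an even integer, s a positive integer, and fix an odd integer i. Let X be the edge set of the graph on vertex set ZMod (sa+2) whose edges are the pairs {u, u + i + 2j} for all even u ∈ ZMod (sa+2) and j = 0, 1, …, s (this graph realizes the generalized cluster complex Δ^s(I₂(a)), and its edges are the facets); the cyclic group C of order sa+2 acts on X with its generator sending each vertex v to v+2. For every divisor d ≥ 1 of sa+2 and every primitive d-th root of unity ω ∈ ℂ, the number of edges {u,v} ∈ X with {u + 2(sa+2)/d, v + 2(sa+2)/d} = {u, v} equals the limit, as the complex variable q tends to ω within ℂ ∖ {ω}, of ([sa+2]_q / [2]_q) · ([sa+a]_q / [a]_q). (That is, X, this q-analogue, and this action of the cyclic group of order sa+2 exhibit the cyclic sieving phenomenon.) -/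
open Filter Topology

lemma qInt_mul (q : ℂ) (n t : ℕ) :
    qInt q (n * t) = qInt q n * ∑ k ∈ Finset.range t, (q ^ n) ^ k := by
  induction t with
  | zero => simp [qInt]
  | succ t ih =>
    rw [show n * (t+1) = n*t + n by ring]
    unfold qInt at *
    rw [Finset.sum_range_add, ih, Finset.sum_range_succ, mul_add]
    congr 1
    rw [Finset.sum_mul]
    refine Finset.sum_congr rfl fun j hj => ?_
    rw [pow_add, pow_mul]; ring

lemma finite_pow_roots (n : ℕ) (hn : 0 < n) : {q : ℂ | q ^ n = 1}.Finite := by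
  have hp : (Polynomial.X ^ n - 1 : Polynomial ℂ) ≠ 0 := by
    intro h
    have := congrArg (Polynomial.eval 0) h
    simp [zero_pow hn.ne'] at this
  exact (Polynomial.finite_setOf_isRoot hp).subset fun q hq => by
    simp only [Set.mem_setOf_eq, Polynomial.IsRoot, Polynomial.eval_sub,
      Polynomial.eval_pow, Polynomial.eval_X, Polynomial.eval_one, sub_eq_zero]
    exact hq

/-- The cyclic sieving phenomenon for the facets of `Δ^s(I₂(a))`, `a` even:
`X` is the edge set of the graph on `ZMod (sa+2)` joining each even vertex `u` to
`u + i + 2j` for `j = 0, …, s` (`i` a fixed odd integer); the generator of the cyclic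
group of order `sa+2` sends `v` to `v+2`, and the number of edges fixed by adding
`2(sa+2)/d` equals the limit at a primitive `d`-th root of unity of
`([sa+2]_q/[2]_q)·([sa+a]_q/[a]_q)`. -/
theorem stmt4 (a s : ℕ) (i : ℤ) (d : ℕ) (ha : 4 ≤ a) (haeven : Even a) (hs : 0 < s)
    (hiodd : Odd i) (hd : 1 ≤ d) (hdvd : d ∣ (s * a + 2)) (ω : ℂ)
    (hω1 : ω ^ d = 1) (hω2 : ∀ e : ℕ, 0 < e → e < d → ω ^ e ≠ 1) :
    Filter.Tendsto
      (fun q : ℂ => (qInt q (s * a + 2) / qInt q 2) * (qInt q (s * a + a) / qInt q a))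
      (𝓝[≠] ω)
      (𝓝 ((Set.ncard {e : Sym2 (ZMod (s * a + 2)) |
            (∃ u : ZMod (s * a + 2), u.val % 2 = 0 ∧ ∃ j : ℕ, j ≤ s ∧
              e = Sym2.mk u (u + (i : ZMod (s * a + 2)) + ((2 * j : ℕ) : ZMod (s * a + 2)))) ∧
            rotChord (((2 * ((s * a + 2) / d) : ℕ)) : ZMod (s * a + 2)) e = e} : ℕ) : ℂ)) := by
  obtain ⟨b, hb⟩ := haeven
  have hab : a = 2 * b := by omega
  set N : ℕ := s * a + 2 with hNdef
  have hN2 : 2 ≤ N := by omega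
  haveI : NeZero N := ⟨by omega⟩
  have hsab : s * a = 2 * (s * b) := by rw [hab]; ring
  set m : ℕ := s * b + 1 with hmdef
  have hm : N = 2 * m := by omega
  have h2N : (2 : ℕ) ∣ N := ⟨m, hm⟩
  -- parity homomorphism
  set π : ZMod N →+* ZMod 2 := ZMod.castHom h2N (ZMod 2) with hπdef
  have hπval : ∀ u : ZMod N, π u = ((u.val : ℕ) : ZMod 2) := by
    intro u
    rw [hπdef, ZMod.castHom_apply, ← ZMod.natCast_val]
  have heven : ∀ n : ℕ, π ((2 * n : ℕ) : ZMod N) = 0 := by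
    intro n
    rw [map_natCast]
    push_cast
    rw [show ((2 : ZMod 2)) = 0 by decide]
    ring
  have hπi : π ((i : ℤ) : ZMod N) = 1 := by
    obtain ⟨t, ht⟩ := hiodd
    rw [map_intCast, ht]
    push_cast
    rw [show ((2 : ZMod 2)) = 0 by decide]
    ring
  -- the set
  set S : Set (Sym2 (ZMod N)) := {e : Sym2 (ZMod N) |
      (∃ u : ZMod N, u.val % 2 = 0 ∧ ∃ j : ℕ, j ≤ s ∧
        e = Sym2.mk u (u + (i : ZMod N) + ((2 * j : ℕ) : ZMod N))) ∧
      rotChord (((2 * (N / d) : ℕ)) : ZMod N) e = e} with hSdef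

  have h2sa : s * 2 ≤ s * a := Nat.mul_le_mul_left s (by omega)
  have hcount : S.ncard = if d ≤ 2 then m * (s + 1) else 0 := by
    by_cases hd2 : d ≤ 2
    · rw [if_pos hd2]
      have hr0 : (((2 * (N / d) : ℕ)) : ZMod N) = 0 := by
        rw [ZMod.natCast_eq_zero_iff]
        rcases (by omega : d = 1 ∨ d = 2) with rfl | rfl
        · exact ⟨2, by omega⟩
        · exact ⟨1, by omega⟩
      have hrot : ∀ e : Sym2 (ZMod N), rotChord (((2 * (N / d) : ℕ)) : ZMod N) e = e := by
        intro e
        induction e using Sym2.ind with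
        | _ x y => simp [rotChord, hr0]
      set ψ : Fin m × Fin (s+1) → Sym2 (ZMod N) := fun p =>
        Sym2.mk (((2 * (p.1 : ℕ) : ℕ) : ZMod N))
          (((2 * (p.1 : ℕ) : ℕ) : ZMod N) + (i : ZMod N) + ((2 * (p.2 : ℕ) : ℕ) : ZMod N))
        with hψdef
      have hinj : Function.Injective ψ := by
        rintro ⟨k, j⟩ ⟨k', j'⟩ h
        simp only [hψdef, Sym2.eq_iff] at h
        have hk2 : (k : ℕ) < m := k.2
        have hk'2 : (k' : ℕ) < m := k'.2
        have hj2 : (j : ℕ) < s + 1 := j.2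
        have hj'2 : (j' : ℕ) < s + 1 := j'.2
        rcases h with ⟨h1, h2⟩ | ⟨h1, h2⟩
        · have hk : (k : ℕ) = (k' : ℕ) := by
            have := congrArg ZMod.val h1
            rw [ZMod.val_cast_of_lt (by omega), ZMod.val_cast_of_lt (by omega)] at this
            omega
          rw [h1] at h2
          have h3 : ((2 * (j : ℕ) : ℕ) : ZMod N) = ((2 * (j' : ℕ) : ℕ) : ZMod N) :=
            add_left_cancel h2
          have hj : (j : ℕ) = (j' : ℕ) := by
            have := congrArg ZMod.val h3
            rw [ZMod.val_cast_of_lt (by omega), ZMod.val_cast_of_lt (by omega)] at this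
            omega
          exact Prod.ext (Fin.ext hk) (Fin.ext hj)
        · exfalso
          have := congrArg π h1
          simp only [map_add, heven, hπi] at this
          simp at this
      have hseteq : S = Set.range ψ := by
        ext e
        simp only [hSdef, Set.mem_setOf_eq, Set.mem_range]
        constructor
        · rintro ⟨⟨u, hu, j, hj, rfl⟩, -⟩
          have huval : u.val < N := ZMod.val_lt u
          refine ⟨(⟨u.val / 2, by omega⟩, ⟨j, by omega⟩), ?_⟩
          have hu2 : ((2 * (u.val / 2) : ℕ) : ZMod N) = u := by
            rw [show 2 * (u.val / 2) = u.val by omega]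
            rw [ZMod.natCast_val, ZMod.cast_id]
          simp only [hψdef]
          rw [hu2]
        · rintro ⟨⟨k, j⟩, rfl⟩
          have hk2 : (k : ℕ) < m := k.2
          have hj2 : (j : ℕ) < s + 1 := j.2
          refine ⟨⟨((2 * (k : ℕ) : ℕ) : ZMod N), ?_, (j : ℕ), by omega, ?_⟩, hrot _⟩
          · rw [ZMod.val_cast_of_lt (by omega)]; omega
          · simp [hψdef]
      rw [hseteq, ← Nat.card_coe_set_eq, Nat.card_range_of_injective hinj]
      simp [Nat.card_eq_fintype_card]
    · rw [if_neg hd2]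
      have hempty : S = ∅ := by
        ext e
        simp only [hSdef, Set.mem_setOf_eq, Set.mem_empty_iff_false, iff_false]
        rintro ⟨⟨u, hu, j, hj, rfl⟩, hfix⟩
        simp only [rotChord, Sym2.map_pair_eq, Sym2.eq_iff] at hfix
        rcases hfix with ⟨h1, h2⟩ | ⟨h1, h2⟩
        · have hr : (((2 * (N / d) : ℕ)) : ZMod N) = 0 := by
            have := h1
            rwa [add_eq_left] at this
          rw [ZMod.natCast_eq_zero_iff] at hr
          have ht1 : 1 ≤ N / d := (Nat.one_le_div_iff (by omega)).mpr
            (Nat.le_of_dvd (by omega) hdvd)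
          have ht2 : N = d * (N / d) := (Nat.mul_div_cancel' hdvd).symm
          have ht3 : 3 * (N / d) ≤ d * (N / d) := Nat.mul_le_mul_right _ (by omega)
          have := Nat.le_of_dvd (by omega) hr
          omega
        · have := congrArg π h1
          simp only [map_add, heven, hπi] at this
          simp at this
      rw [hempty]
      simp

  -- analytic part
  set g : ℂ → ℂ := fun q =>
    (∑ k ∈ Finset.range m, (q ^ 2) ^ k) * (∑ k ∈ Finset.range (s + 1), (q ^ a) ^ k)
    with hgdef

  have hfg : ∀ᶠ q in 𝓝[≠] ω,
      (qInt q (s * a + 2) / qInt q 2) * (qInt q (s * a + a) / qInt q a) = g q := by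
    have hBfin : ({q : ℂ | q ^ a = 1} ∪ {(-1 : ℂ)}).Finite :=
      (finite_pow_roots a (by omega)).union (Set.finite_singleton _)
    have h1 : ∀ᶠ q in 𝓝 ω, q ∉ (({q : ℂ | q ^ a = 1} ∪ {(-1 : ℂ)}) \ {ω}) :=
      hBfin.diff.isClosed.isOpen_compl.eventually_mem (by simp)
    filter_upwards [eventually_nhdsWithin_of_eventually_nhds h1, self_mem_nhdsWithin]
      with q hq1 hq2
    have hqne : q ≠ ω := hq2
    have hqB : q ∉ ({q : ℂ | q ^ a = 1} ∪ {(-1 : ℂ)}) := fun hB => hq1 ⟨hB, hqne⟩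
    have hq2ne : qInt q 2 ≠ 0 := by
      rw [qInt_two]
      intro h
      exact hqB (Or.inr (by simp only [Set.mem_singleton_iff]; linear_combination h))
    have hqane : qInt q a ≠ 0 := by
      intro h
      have hgs := geom_sum_mul q a
      rw [show (∑ i ∈ Finset.range a, q ^ i) = qInt q a from rfl, h, zero_mul] at hgs
      exact hqB (Or.inl (by simp only [Set.mem_setOf_eq]; linear_combination -hgs))
    have e1 : qInt q (s * a + 2) = qInt q 2 * ∑ k ∈ Finset.range m, (q ^ 2) ^ k := by
      rw [show s * a + 2 = 2 * m from hm, qInt_mul]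
    have e2 : qInt q (s * a + a) = qInt q a * ∑ k ∈ Finset.range (s + 1), (q ^ a) ^ k := by
      rw [show s * a + a = a * (s + 1) by ring, qInt_mul]
    rw [e1, e2, mul_div_cancel_left₀ _ hq2ne, mul_div_cancel_left₀ _ hqane, hgdef]

  have hgcont : Filter.Tendsto g (𝓝[≠] ω) (𝓝 (g ω)) := by
    have : Continuous g := by fun_prop
    exact (this.tendsto ω).mono_left nhdsWithin_le_nhds

  have hgω : g ω = ((S.ncard : ℕ) : ℂ) := by
    by_cases hd2 : d ≤ 2
    · have hω2eq : ω ^ 2 = 1 := by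
        rcases (by omega : d = 1 ∨ d = 2) with rfl | rfl
        · rw [pow_one] at hω1; rw [hω1, one_pow]
        · exact hω1
      have hωa : ω ^ a = 1 := by rw [hab, pow_mul, hω2eq, one_pow]
      rw [hcount, if_pos hd2, hgdef]
      simp only [hω2eq, hωa, one_pow, Finset.sum_const, Finset.card_range, nsmul_eq_mul,
        mul_one]
      push_cast
      ring
    · have hω2ne : ω ^ 2 ≠ 1 := hω2 2 (by omega) (by omega)
      have hωN : ω ^ N = 1 := by
        rw [show N = d * (N / d) from (Nat.mul_div_cancel' hdvd).symm, pow_mul, hω1, one_pow]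
      have hsum1 : (∑ k ∈ Finset.range m, (ω ^ 2) ^ k) = 0 := by
        rw [geom_sum_eq hω2ne, ← pow_mul, show 2 * m = N from hm.symm, hωN]
        simp
      rw [hcount, if_neg hd2, hgdef]
      simp [hsum1]

  rw [← hgω]
  exact hgcont.congr' (hfg.mono fun q h => h.symm)
end

section
/- Let s ≥ 1 and n ≥ 2 be integers and 0 ≤ k ≤ n. Let t ≥ 2 be a divisor of s(n−1)+1 and let ω ∈ ℂ be a primitive t-th root of unity. Then: (i) [[s(n−1)+k, k]]_ω · [[n−1, k]]_ω = C((s(n−1)+1+k)/t − 1, k/t)·C(⌊(n−2)/t⌋, k/t) if t divides k, and 0 otherwise; (ii) [[s(n−1)+k, k]]_ω · [[n−2, k−1]]_ω = 0; (iii) [[s(n−1)+k, k]]_ω · [[n−2, k−2]]_ω = C((s(n−1)+1+k)/t − 1, k/t)·C(n/t − 1, k/t − 1) if t divides both k and n, and 0 otherwise; (iv) [[s(n−1)+k−1, k]]_ω · [[n−2, k−2]]_ω = C((s(n−1)+1+k)/t − 1, k/t)·C(n/t − 1, k/t − 1) if t divides both k and n, and 0 otherwise. -/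
open Filter Topology

section AuxQLucas
open Polynomial

lemma gbPoly_zero_right (m : ℕ) : gbPoly m 0 = 1 := by cases m <;> rfl

lemma gbPoly_succ_succ (m k : ℕ) :
    gbPoly (m+1) (k+1) = gbPoly m k + Polynomial.X ^ (k + 1) * gbPoly m (k + 1) := rfl

lemma gbPoly_eq_zero_of_lt : ∀ m k : ℕ, m < k → gbPoly m k = 0 := by
  intro m
  induction m with
  | zero => intro k hk; obtain ⟨j, rfl⟩ := Nat.exists_eq_add_of_lt hk; rfl
  | succ m ih =>
    intro k hk
    obtain ⟨j, rfl⟩ : ∃ j, k = j + 1 := ⟨k - 1, by omega⟩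
    rw [gbPoly_succ_succ, ih j (by omega), ih (j+1) (by omega), mul_zero, add_zero]

lemma gbPoly_self : ∀ m : ℕ, gbPoly m m = 1 := by
  intro m
  induction m with
  | zero => rfl
  | succ m ih => rw [gbPoly_succ_succ, ih, gbPoly_eq_zero_of_lt m (m+1) (by omega), mul_zero, add_zero]

lemma gb_zero_right (m : ℕ) (q : ℂ) : gb m 0 q = 1 := by simp [gb, gbPoly_zero_right]
lemma gb_self (m : ℕ) (q : ℂ) : gb m m q = 1 := by simp [gb, gbPoly_self]
lemma gb_eq_zero_of_lt {m k : ℕ} (h : m < k) (q : ℂ) : gb m k q = 0 := by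
  simp [gb, gbPoly_eq_zero_of_lt m k h]
lemma gb_succ_succ (m k : ℕ) (q : ℂ) :
    gb (m+1) (k+1) q = gb m k q + q^(k+1) * gb m (k+1) q := by
  simp [gb, gbPoly_succ_succ]

/-- X^t - 1 as product over range. -/
lemma prod_range_X_sub_C {t : ℕ} {ζ : ℂ} (ht : 0 < t) (h : IsPrimitiveRoot ζ t) :
    ∏ i ∈ Finset.range t, (X - C (ζ ^ i)) = X ^ t - 1 := by
  have hmonic : (X ^ t - C (1:ℂ)).Monic := monic_X_pow_sub_C (1 : ℂ) ht.ne'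
  have hroots : (X ^ t - C (1:ℂ)).roots = (Multiset.range t).map (fun i => ζ ^ i) := by
    have := h.nthRoots_eq (α := 1) (a := (1:ℂ)) (one_pow t)
    simpa [nthRoots, mul_one] using this
  have hcard : Multiset.card (X ^ t - C (1:ℂ)).roots = (X ^ t - C (1:ℂ)).natDegree := by
    rw [hroots, Multiset.card_map, Multiset.card_range, natDegree_X_pow_sub_C]
  have := prod_multiset_X_sub_C_of_monic_of_roots_card_eq hmonic hcard
  rw [hroots, Multiset.map_map] at this
  rw [Finset.prod_eq_multiset_prod]
  simpa [Function.comp, map_one] using this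

/-- Twisted generating polynomial. -/

lemma coeff_sum_C_X_pow (c : ℕ → ℂ) (N n : ℕ) :
    (∑ k ∈ Finset.range N, C (c k) * X ^ k).coeff n = if n < N then c n else 0 := by
  rw [finset_sum_coeff]
  by_cases hn : n < N
  · rw [if_pos hn, Finset.sum_eq_single n]
    · rw [coeff_C_mul, coeff_X_pow, if_pos rfl, mul_one]
    · intro b _ hb
      rw [coeff_C_mul, coeff_X_pow, if_neg (Ne.symm hb), mul_zero]
    · intro h; exact absurd (Finset.mem_range.mpr hn) h
  · rw [if_neg hn, Finset.sum_eq_zero]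
    intro b hb
    simp only [Finset.mem_range] at hb
    rw [coeff_C_mul, coeff_X_pow, if_neg (by omega : ¬ n = b), mul_zero]

/-- Twisted generating polynomial. -/
noncomputable def Fgen (q : ℂ) (m : ℕ) : Polynomial ℂ :=
  ∑ k ∈ Finset.range (m+1), C (q ^ (k.choose 2) * gb m k q) * X ^ k

lemma Fgen_coeff (q : ℂ) (m n : ℕ) :
    (Fgen q m).coeff n = q ^ (n.choose 2) * gb m n q := by
  rw [Fgen, coeff_sum_C_X_pow]
  split_ifs with h
  · rfl
  · rw [gb_eq_zero_of_lt (by omega), mul_zero]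

lemma Fgen_comp_coeff (q : ℂ) (m n : ℕ) :
    ((Fgen q m).comp (C q * X)).coeff n = q ^ ((n+1).choose 2) * gb m n q := by
  have hB : (Fgen q m).comp (C q * X)
      = ∑ k ∈ Finset.range (m+1), C (q ^ ((k+1).choose 2) * gb m k q) * X ^ k := by
    rw [Fgen, sum_comp]
    refine Finset.sum_congr rfl fun k _ => ?_
    rw [mul_comp, C_comp, pow_comp, X_comp, mul_pow, ← C_pow, ← mul_assoc, ← C_mul]
    congr 2
    rw [Nat.choose_succ_succ k 1, Nat.choose_one_right, pow_add]
    ring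
  rw [hB, coeff_sum_C_X_pow]
  split_ifs with h
  · rfl
  · rw [gb_eq_zero_of_lt (by omega), mul_zero]

lemma Fgen_succ (q : ℂ) (m : ℕ) :
    Fgen q (m+1) = (1 + X) * (Fgen q m).comp (C q * X) := by
  ext n
  rw [add_mul, one_mul, coeff_add, Fgen_coeff, Fgen_comp_coeff]
  cases n with
  | zero =>
    rw [mul_coeff_zero, coeff_X_zero, zero_mul, add_zero]
    simp [gb_zero_right]
  | succ n =>
    rw [mul_comm X, coeff_mul_X, Fgen_comp_coeff, gb_succ_succ]
    rw [Nat.choose_succ_succ (n+1) 1, Nat.choose_one_right, pow_add]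
    ring

lemma Fgen_prod (q : ℂ) (m : ℕ) :
    Fgen q m = ∏ i ∈ Finset.range m, (1 + C (q ^ i) * X) := by
  induction m with
  | zero => simp [Fgen, gb_self]
  | succ m ih =>
    rw [Fgen_succ, ih, prod_comp, Finset.prod_range_succ']
    have hc : ∀ i, ((1 : Polynomial ℂ) + C (q ^ i) * X).comp (C q * X)
        = 1 + C (q ^ (i+1)) * X := fun i => by
      rw [add_comp, one_comp, mul_comp, C_comp, X_comp, ← mul_assoc, ← C_mul, ← pow_succ]
    simp only [hc]
    rw [pow_zero, map_one, one_mul, mul_comm]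

section RootOfUnity

variable {t : ℕ} {ω : ℂ} (ht : 2 ≤ t) (hω1 : ω ^ t = 1)
  (hω2 : ∀ e : ℕ, 0 < e → e < t → ω ^ e ≠ 1)

include ht hω1 hω2

lemma isPrim : IsPrimitiveRoot ω t := by
  refine ⟨hω1, fun l hl => ?_⟩
  have hmod : ω ^ (l % t) = 1 := by
    have : ω ^ l = (ω ^ t) ^ (l / t) * ω ^ (l % t) := by
      rw [← pow_mul, ← pow_add, Nat.div_add_mod]
    rw [hω1, one_pow, one_mul] at this
    rw [← this, hl]
  rcases Nat.eq_zero_or_pos (l % t) with h | h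
  · exact Nat.dvd_of_mod_eq_zero h
  · exact absurd hmod (hω2 _ h (Nat.mod_lt _ (by omega)))

omit hω2 in
lemma omega_ne_zero : ω ≠ 0 := by
  intro h
  rw [h, zero_pow (by omega : t ≠ 0)] at hω1
  exact zero_ne_one hω1

lemma eps_eq : ω ^ (t.choose 2) = (-1 : ℂ) ^ (t + 1) := by
  rcases Nat.even_or_odd t with ⟨u, hu⟩ | ⟨u, hu⟩
  · -- t = u + u
    have hu' : t = 2 * u := by omega
    have hu1 : 1 ≤ u := by omega
    have hch : t.choose 2 = u * (2 * u - 1) := by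
      have h2 : 2 * u * (2 * u - 1) = u * (2 * u - 1) * 2 := by ring
      rw [Nat.choose_two_right, hu', h2, Nat.mul_div_cancel _ two_pos]
    have hωu : ω ^ u = -1 := by
      have hsq : (ω ^ u - 1) * (ω ^ u + 1) = 0 := by
        have h3 : (ω ^ u) ^ 2 = 1 := by
          rw [← pow_mul, (by omega : u * 2 = t)]; exact hω1
        linear_combination h3
      rcases mul_eq_zero.mp hsq with h | h
      · exact absurd (by linear_combination h : ω ^ u = 1) (hω2 u (by omega) (by omega))
      · linear_combination h
    rw [hch, pow_mul, hωu, hu']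
    rw [Odd.neg_one_pow ⟨u - 1, by omega⟩, Odd.neg_one_pow ⟨u, by omega⟩]
  · -- t = 2u + 1
    have hch : t.choose 2 = t * u := by
      have h2 : t * (t - 1) = t * u * 2 := by
        rw [hu, Nat.add_sub_cancel]; ring
      rw [Nat.choose_two_right, h2, Nat.mul_div_cancel _ two_pos]
    rw [hch, pow_mul, hω1, one_pow]
    rw [Even.neg_one_pow ⟨u + 1, by omega⟩]

lemma prod_one_add_eq :
    ∏ i ∈ Finset.range t, (1 + C (ω ^ i) * X) = 1 + C ((-1 : ℂ) ^ (t + 1)) * X ^ t := by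
  have hω0 : ω ≠ 0 := omega_ne_zero ht hω1
  have hprim : IsPrimitiveRoot ω t := isPrim ht hω1 hω2
  have hpriminv : IsPrimitiveRoot ω⁻¹ t := hprim.inv
  -- step 1 : ∏ (X + C ((ω⁻¹)^i)) = X^t - C ((-1)^t)
  have step1 : ∏ i ∈ Finset.range t, (X + C ((ω⁻¹) ^ i)) = X ^ t - C ((-1 : ℂ) ^ t) := by
    have hbase := prod_range_X_sub_C (by omega : 0 < t) hpriminv
    have hcomp := congrArg (fun p => p.comp (-X)) hbase
    simp only [prod_comp, sub_comp, pow_comp, X_comp, C_comp, one_comp] at hcomp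
    have hneg : ∀ i : ℕ, -X - C ((ω⁻¹) ^ i) = (-1 : Polynomial ℂ) * (X + C ((ω⁻¹) ^ i)) := by
      intro i; ring
    rw [Finset.prod_congr rfl (fun i _ => hneg i), Finset.prod_mul_distrib,
      Finset.prod_const, Finset.card_range] at hcomp
    have hpow : (-X : Polynomial ℂ) ^ t = (-1 : Polynomial ℂ) ^ t * X ^ t := by ring
    rw [hpow] at hcomp
    have hne : ((-1 : Polynomial ℂ) ^ t) ≠ 0 := by
      apply pow_ne_zero; exact neg_ne_zero.mpr one_ne_zero
    apply mul_left_cancel₀ hne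
    rw [hcomp]
    have hCC : (C ((-1:ℂ) ^ t)) = ((-1 : Polynomial ℂ) ^ t) := by
      rw [map_pow, map_neg, map_one]
    rw [hCC]
    have h5 : ((-1 : Polynomial ℂ)) ^ (t * 2) = 1 := by
      exact Even.neg_one_pow ⟨t, by omega⟩
    linear_combination h5
  -- step 2 : factor out C (ω^i)
  have step2 : ∀ i : ℕ, (1 : Polynomial ℂ) + C (ω ^ i) * X
      = C (ω ^ i) * (X + C ((ω⁻¹) ^ i)) := by
    intro i
    have hinv : ω ^ i * (ω⁻¹) ^ i = 1 := by
      rw [← mul_pow, mul_inv_cancel₀ hω0, one_pow]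
    rw [mul_add, ← C_mul, hinv, map_one]
    ring
  rw [Finset.prod_congr rfl (fun i _ => step2 i), Finset.prod_mul_distrib, step1]
  have hprodC : ∏ i ∈ Finset.range t, C (ω ^ i) = C (ω ^ (t.choose 2)) := by
    rw [← map_prod, Finset.prod_pow_eq_pow_sum]
    congr 1
    rw [Nat.choose_two_right, ← Finset.sum_range_id_mul_two t, Nat.mul_div_cancel _ two_pos]
  rw [hprodC, eps_eq ht hω1 hω2]
  rw [mul_sub, ← C_mul, ← pow_add]
  have h4 : ((-1 : ℂ)) ^ (t + 1 + t) = -1 := by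
    rw [Odd.neg_one_pow ⟨t, by omega⟩]
  rw [h4, map_neg, map_one]
  ring

end RootOfUnity

lemma choose2_succ (n : ℕ) : (n + 1).choose 2 = n.choose 2 + n := by
  have h : (n + 1).choose 2 = n.choose 1 + n.choose 2 := Nat.choose_succ_succ n 1
  rw [h, Nat.choose_one_right]; omega

lemma choose2_add (a b : ℕ) : (a + b).choose 2 = a.choose 2 + a * b + b.choose 2 := by
  induction b with
  | zero => simp
  | succ b ih =>
    have h1 : (a + b + 1).choose 2 = (a + b).choose 2 + (a + b) := choose2_succ (a + b)
    have h2 : (b + 1).choose 2 = b.choose 2 + b := choose2_succ b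
    have h3 : a * (b + 1) = a * b + a := by ring
    show (a + b + 1).choose 2 = a.choose 2 + a * (b + 1) + (b + 1).choose 2
    omega

lemma twist {t : ℕ} {ω : ℂ} (hω1 : ω ^ t = 1) (j k' : ℕ) :
    ω ^ ((t * j + k').choose 2) = (ω ^ (t.choose 2)) ^ j * ω ^ (k'.choose 2) := by
  induction j with
  | zero => simp
  | succ j ih =>
    have h1 : t * (j + 1) + k' = (t * j + k') + t := by ring
    rw [h1, choose2_add, pow_add, pow_add, ih, pow_mul', hω1, one_pow, mul_one]
    ring

section RootOfUnity2

variable {t : ℕ} {ω : ℂ} (ht : 2 ≤ t) (hω1 : ω ^ t = 1)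
  (hω2 : ∀ e : ℕ, 0 < e → e < t → ω ^ e ≠ 1)

include ht hω1 hω2

lemma Fgen_decomp (a r : ℕ) :
    Fgen ω (a * t + r)
      = (1 + C ((-1 : ℂ) ^ (t + 1)) * X ^ t) ^ a * Fgen ω r := by
  induction a with
  | zero => simp
  | succ a ih =>
    have h1 : (a + 1) * t + r = t + (a * t + r) := by ring
    rw [Fgen_prod, h1, Finset.prod_range_add]
    have h2 : ∀ i : ℕ, (1 : Polynomial ℂ) + C (ω ^ (t + i)) * X
        = 1 + C (ω ^ i) * X := by
      intro i; rw [pow_add, hω1, one_mul]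
    rw [Finset.prod_congr rfl (fun i _ => h2 i), prod_one_add_eq ht hω1 hω2,
      ← Fgen_prod, ih, pow_succ]
    ring

lemma qLucas_aux (a r k : ℕ) (hr : r < t) :
    gb (a * t + r) k ω = ((a.choose (k / t) : ℕ) : ℂ) * gb r (k % t) ω := by
  have hω0 : ω ≠ 0 := omega_ne_zero ht hω1
  set ε : ℂ := (-1 : ℂ) ^ (t + 1) with hε
  set j0 := k / t with hj0
  set k' := k % t with hk'def
  have hk : t * j0 + k' = k := Nat.div_add_mod k t
  have hk't : k' < t := Nat.mod_lt _ (by omega)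
  -- coefficient extraction from Fgen_decomp
  have hd := congrArg (fun p => p.coeff k) (Fgen_decomp ht hω1 hω2 a r)
  rw [Fgen_coeff] at hd
  -- expand the power
  have hexp : ((1 : Polynomial ℂ) + C ε * X ^ t) ^ a
      = ∑ m ∈ Finset.range (a + 1), C (ε ^ m * (a.choose m : ℂ)) * X ^ (t * m) := by
    rw [add_comm (1 : Polynomial ℂ), add_pow]
    refine Finset.sum_congr rfl fun m _ => ?_
    rw [one_pow, mul_one, mul_pow, ← C_pow, ← pow_mul X t m, ← Polynomial.C_eq_natCast,
      C_mul]
    ring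
  rw [hexp, Finset.sum_mul, finset_sum_coeff] at hd
  have hterm : ∀ m ∈ Finset.range (a + 1),
      (C (ε ^ m * (a.choose m : ℂ)) * X ^ (t * m) * Fgen ω r).coeff k
        = ε ^ m * (a.choose m : ℂ) *
            (if t * m ≤ k then ω ^ ((k - t * m).choose 2) * gb r (k - t * m) ω else 0) := by
    intro m _
    have hre : C (ε ^ m * (a.choose m : ℂ)) * X ^ (t * m) * Fgen ω r
        = C (ε ^ m * (a.choose m : ℂ)) * Fgen ω r * X ^ (t * m) := by ring
    rw [hre, coeff_mul_X_pow', coeff_C_mul]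
    split_ifs with h
    · rw [Fgen_coeff]
    · rw [mul_zero]
  rw [Finset.sum_congr rfl hterm] at hd
  -- all terms except m = j0 vanish
  have hvanish : ∀ m : ℕ, m ≠ j0 → m ≤ a →
      ε ^ m * (a.choose m : ℂ) *
          (if t * m ≤ k then ω ^ ((k - t * m).choose 2) * gb r (k - t * m) ω else 0) = 0 := by
    intro m hm _
    split_ifs with h
    · -- since m ≠ j0 and t*m ≤ k, we must have m < j0, hence k - t*m ≥ t > r
      have hmlt : m < j0 := by
        by_contra hcon
        have h1 : j0 + 1 ≤ m := by omega
        have h2 : t * (j0 + 1) ≤ t * m := Nat.mul_le_mul_left t h1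
        have h3 : t * (j0 + 1) = t * j0 + t := by ring
        omega
      have h4 : t * (m + 1) ≤ t * j0 := Nat.mul_le_mul_left t hmlt
      have h5 : t * (m + 1) = t * m + t := by ring
      have h6 : r < k - t * m := by omega
      rw [gb_eq_zero_of_lt h6, mul_zero, mul_zero]
    · rw [mul_zero]
  have hsum : ∑ m ∈ Finset.range (a + 1),
      (ε ^ m * (a.choose m : ℂ) *
        (if t * m ≤ k then ω ^ ((k - t * m).choose 2) * gb r (k - t * m) ω else 0))
      = (a.choose j0 : ℂ) * (ε ^ j0 * ω ^ (k'.choose 2)) * gb r k' ω := by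
    by_cases hja : j0 ≤ a
    · rw [Finset.sum_eq_single_of_mem j0 (Finset.mem_range.mpr (by omega))
        (fun m hmem hm => hvanish m hm (by have := Finset.mem_range.mp hmem; omega))]
      · have h7 : t * j0 ≤ k := by omega
        have h8 : k - t * j0 = k' := by omega
        rw [if_pos h7, h8]
        ring
    · rw [Finset.sum_eq_zero (fun m hm => hvanish m (by simp only [Finset.mem_range] at hm; omega)
        (by simp only [Finset.mem_range] at hm; omega))]
      rw [Nat.choose_eq_zero_of_lt (by omega), Nat.cast_zero, zero_mul, zero_mul]
  rw [hsum] at hd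
  -- now use the twist identity
  have htw : ω ^ (k.choose 2) = ε ^ j0 * ω ^ (k'.choose 2) := by
    rw [← hk, twist hω1, eps_eq ht hω1 hω2]
  have hne : ε ^ j0 * ω ^ (k'.choose 2) ≠ 0 := by
    apply mul_ne_zero
    · apply pow_ne_zero
      rw [hε]
      apply pow_ne_zero
      exact neg_ne_zero.mpr one_ne_zero
    · exact pow_ne_zero _ hω0
  apply mul_left_cancel₀ hne
  rw [← htw, hd, htw]
  ring

lemma qLucas (m k : ℕ) (hr : m % t < t) :
    gb m k ω = (((m / t).choose (k / t) : ℕ) : ℂ) * gb (m % t) (k % t) ω := by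
  have h := qLucas_aux ht hω1 hω2 (m / t) (m % t) k hr
  rwa [Nat.mul_comm (m / t) t, Nat.div_add_mod] at h

end RootOfUnity2

lemma tdiv_helper {t : ℕ} (ht : 0 < t) (q x : ℕ) (hx : x < t) : (t * q + x) / t = q := by
  rw [Nat.mul_add_div ht, Nat.div_eq_of_lt hx, add_zero]

lemma tmod_helper {t : ℕ} (ht : 0 < t) (q x : ℕ) (hx : x < t) : (t * q + x) % t = x := by
  rw [Nat.mul_add_mod, Nat.mod_eq_of_lt hx]


end AuxQLucas


/-- Evaluations at a primitive `t`-th root of unity `ω`, where `t ≥ 2`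
divides `s(n−1)+1`, of the four products of Gaussian binomials occurring in
`F(s,n,k;q)`. -/
theorem stmt15 (s n k t : ℕ) (hs : 1 ≤ s) (hn : 2 ≤ n) (hk : k ≤ n)
    (ht : 2 ≤ t) (htdvd : t ∣ (s * (n - 1) + 1)) (ω : ℂ)
    (hω1 : ω ^ t = 1) (hω2 : ∀ e : ℕ, 0 < e → e < t → ω ^ e ≠ 1) :
    (gb (s * (n - 1) + k) k ω * gb (n - 1) k ω
        = if t ∣ k then
            ((Nat.choose ((s * (n - 1) + 1 + k) / t - 1) (k / t) *
              Nat.choose ((n - 2) / t) (k / t) : ℕ) : ℂ)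
          else 0) ∧
    (gb (s * (n - 1) + k) k ω * gbZ (n - 2) ((k : ℤ) - 1) ω = 0) ∧
    (gb (s * (n - 1) + k) k ω * gbZ (n - 2) ((k : ℤ) - 2) ω
        = if t ∣ k ∧ t ∣ n then
            ((Nat.choose ((s * (n - 1) + 1 + k) / t - 1) (k / t) *
              chooseZ (n / t - 1) ((k / t : ℤ) - 1) : ℕ) : ℂ)
          else 0) ∧
    (gb (s * (n - 1) + k - 1) k ω * gbZ (n - 2) ((k : ℤ) - 2) ω
        = if t ∣ k ∧ t ∣ n then
            ((Nat.choose ((s * (n - 1) + 1 + k) / t - 1) (k / t) *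
              chooseZ (n / t - 1) ((k / t : ℤ) - 1) : ℕ) : ℂ)
          else 0) := by
  have ht0 : 0 < t := by omega
  obtain ⟨c, hc⟩ := htdvd
  have hsn1 : 1 ≤ s * (n - 1) := Nat.one_le_iff_ne_zero.mpr
    (Nat.mul_ne_zero (by omega) (by omega))
  have hc1 : 1 ≤ c := by
    rcases Nat.eq_zero_or_pos c with h | h
    · rw [h, mul_zero] at hc; omega
    · exact h
  -- the decomposition of k
  set j := k / t with hj
  set r := k % t with hrdef
  have hkeq : k = t * j + r := (Nat.div_add_mod k t).symm
  have hrt : r < t := Nat.mod_lt _ ht0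
  clear_value j r
  have hcast : ((k : ℤ)) / ((t : ℤ)) = ((j : ℤ)) := by
    rw [hj]; exact (Int.natCast_div k t).symm
  have hdvd_iff : t ∣ k ↔ r = 0 := by
    constructor
    · intro h; rw [hrdef]; exact (Nat.mod_eq_zero_of_dvd h)
    · intro h; exact ⟨j, by omega⟩
  -- the decomposition of n - 1
  set q1 := (n - 1) / t with hq1
  set x1 := (n - 1) % t with hx1def
  have hn1 : n - 1 = t * q1 + x1 := (Nat.div_add_mod (n-1) t).symm
  have hx1t : x1 < t := Nat.mod_lt _ ht0
  clear_value q1 x1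
  have hnd1 : ¬ t ∣ (n - 1) := by
    rintro ⟨d, hd⟩
    have h1 : s * (n - 1) = t * (s * d) := by rw [hd]; ring
    have h2 : t ∣ t * c - t * (s * d) :=
      Nat.dvd_sub (Dvd.intro c rfl) (Dvd.intro (s * d) rfl)
    have h3 : t * c - t * (s * d) = 1 := by omega
    rw [h3] at h2
    have := Nat.le_of_dvd one_pos h2
    omega
  have hx1pos : 1 ≤ x1 := by
    rcases Nat.eq_zero_or_pos x1 with h | h
    · exact absurd ⟨q1, by omega⟩ hnd1
    · exact h
  -- specialized q-Lucas
  have QL : ∀ (q x jj y : ℕ), x < t → y < t →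
      gb (t * q + x) (t * jj + y) ω = ((q.choose jj : ℕ) : ℂ) * gb x y ω := by
    intro q x jj y hx hy
    rw [qLucas ht hω1 hω2 _ _ (Nat.mod_lt _ ht0), tdiv_helper ht0 q x hx,
      tmod_helper ht0 q x hx, tdiv_helper ht0 jj y hy, tmod_helper ht0 jj y hy]
  have hta : t * (c + j) = t * c + t * j := by ring
  -- first factor when t ∤ k
  have F0 : ¬ t ∣ k → gb (s * (n - 1) + k) k ω = 0 := by
    intro hdk
    have hr1 : 1 ≤ r := by
      rcases Nat.eq_zero_or_pos r with h | h
      · exact absurd (hdvd_iff.mpr h) hdk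
      · exact h
    have e1 : s * (n - 1) + k = t * (c + j) + (r - 1) := by omega
    rw [e1, hkeq, QL (c + j) (r - 1) j r (by omega) hrt,
      gb_eq_zero_of_lt (by omega : r - 1 < r), mul_zero]
  have htb : t * (c + j - 1) + t = t * (c + j) := by
    have h3 : t * (c + j - 1) + t = t * (c + j - 1 + 1) := by ring
    rw [h3, (by omega : c + j - 1 + 1 = c + j)]
  -- first factor when t ∣ k
  have FF : t ∣ k → gb (s * (n - 1) + k) k ω = (((c + j - 1).choose j : ℕ) : ℂ) := by
    intro hdk
    have hr0 : r = 0 := hdvd_iff.mp hdk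
    have e1 : s * (n - 1) + k = t * (c + j - 1) + (t - 1) := by omega
    have e2 : k = t * j + 0 := by omega
    rw [e1, e2, QL (c + j - 1) (t - 1) j 0 (by omega) (by omega), gb_zero_right, mul_one]
  -- div value for the RHS
  have hdiv1 : t ∣ k → (s * (n - 1) + 1 + k) / t = c + j := by
    intro hdk
    have hr0 : r = 0 := hdvd_iff.mp hdk
    rw [(by omega : s * (n - 1) + 1 + k = t * (c + j) + 0), tdiv_helper ht0 _ 0 ht0]
  refine ⟨?_, ?_, ?_, ?_⟩
  · -- part 1
    by_cases hdk : t ∣ k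
    · have hr0 : r = 0 := hdvd_iff.mp hdk
      have e2 : k = t * j + 0 := by omega
      have f2 : gb (n - 1) k ω = ((q1.choose j : ℕ) : ℂ) := by
        rw [hn1, e2, QL q1 x1 j 0 hx1t (by omega), gb_zero_right, mul_one]
      have f3 : (n - 2) / t = q1 := by
        rw [(by omega : n - 2 = t * q1 + (x1 - 1)), tdiv_helper ht0 _ _ (by omega)]
      rw [FF hdk, f2, if_pos hdk, f3, hdiv1 hdk]
      push_cast
      ring
    · rw [F0 hdk, zero_mul, if_neg hdk]
  · -- part 2
    by_cases hk0 : k = 0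
    · have : gbZ (n - 2) ((k : ℤ) - 1) ω = 0 := by
        rw [gbZ, if_neg (by omega)]
      rw [this, mul_zero]
    · have hz : gbZ (n - 2) ((k : ℤ) - 1) ω = gb (n - 2) (k - 1) ω := by
        rw [gbZ, if_pos (by omega)]
        congr 1
        omega
      by_cases hdk : t ∣ k
      · have hr0 : r = 0 := hdvd_iff.mp hdk
        have hj1 : 1 ≤ j := by
          rcases Nat.eq_zero_or_pos j with h | h
          · rw [h, mul_zero] at hkeq; omega
          · exact h
        have htc : t * (j - 1) + t = t * j := by
          have h3 : t * (j - 1) + t = t * (j - 1 + 1) := by ring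
          rw [h3, (by omega : j - 1 + 1 = j)]
        have e1 : k - 1 = t * (j - 1) + (t - 1) := by omega
        have e2 : n - 2 = t * q1 + (x1 - 1) := by omega
        have f2 : gb (n - 2) (k - 1) ω = 0 := by
          rw [e2, e1, QL q1 (x1 - 1) (j - 1) (t - 1) (by omega) (by omega),
            gb_eq_zero_of_lt (by omega : x1 - 1 < t - 1), mul_zero]
        rw [hz, f2, mul_zero]
      · rw [F0 hdk, zero_mul]
  · -- part 3
    by_cases hk1 : k ≤ 1
    · have hgz : gbZ (n - 2) ((k : ℤ) - 2) ω = 0 := by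
        rw [gbZ, if_neg (by omega)]
      rw [hgz, mul_zero]
      split_ifs with hcond
      · have hj0 : j = 0 := by
          have hk0 : k = 0 := by
            rcases hcond with ⟨hdk, _⟩
            rcases Nat.eq_zero_or_pos k with h | h
            · exact h
            · have := Nat.le_of_dvd h hdk; omega
          rw [hj, hk0, Nat.zero_div]
        have hcz : chooseZ (n / t - 1) ((j : ℤ) - 1) = 0 := by
          rw [chooseZ, if_neg (by omega)]
        rw [hcast, hcz, mul_zero, Nat.cast_zero]
      · rfl
    · -- k ≥ 2
      have hz2 : gbZ (n - 2) ((k : ℤ) - 2) ω = gb (n - 2) (k - 2) ω := by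
        rw [gbZ, if_pos (by omega)]
        congr 1
        omega
      by_cases hdk : t ∣ k
      · have hr0 : r = 0 := hdvd_iff.mp hdk
        have hj1 : 1 ≤ j := by
          rcases Nat.eq_zero_or_pos j with h | h
          · rw [h, mul_zero] at hkeq; omega
          · exact h
        have htc : t * (j - 1) + t = t * j := by
          have h3 : t * (j - 1) + t = t * (j - 1 + 1) := by ring
          rw [h3, (by omega : j - 1 + 1 = j)]
        have e_k2 : k - 2 = t * (j - 1) + (t - 2) := by omega
        have htq : t * (q1 + 1) = t * q1 + t := by ring
        by_cases hdn : t ∣ n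
        · have hx1top : x1 = t - 1 := by
            by_contra hcon
            have e : n = t * q1 + (x1 + 1) := by omega
            have h5 : n % t = x1 + 1 := by rw [e, tmod_helper ht0 _ _ (by omega)]
            have h0 : n % t = 0 := Nat.mod_eq_zero_of_dvd hdn
            omega
          have hndiv : n / t = q1 + 1 := by
            rw [(by omega : n = t * (q1 + 1) + 0), tdiv_helper ht0 _ 0 ht0]
          have e_n2 : n - 2 = t * q1 + (t - 2) := by omega
          have f2 : gb (n - 2) (k - 2) ω = ((q1.choose (j - 1) : ℕ) : ℂ) := by
            rw [e_n2, e_k2, QL q1 (t - 2) (j - 1) (t - 2) (by omega) (by omega),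
              gb_self, mul_one]
          have hchz : chooseZ (n / t - 1) ((j : ℤ) - 1) = q1.choose (j - 1) := by
            rw [hndiv, chooseZ, if_pos (by omega)]
            congr 1 <;> omega
          rw [hz2, FF hdk, f2, if_pos ⟨hdk, hdn⟩, hdiv1 hdk, hcast, hchz]
          push_cast
          ring
        · have hx1ne : x1 ≠ t - 1 := by
            intro hcon
            exact hdn ⟨q1 + 1, by omega⟩
          have e_n2 : n - 2 = t * q1 + (x1 - 1) := by omega
          have f2 : gb (n - 2) (k - 2) ω = 0 := by
            rw [e_n2, e_k2, QL q1 (x1 - 1) (j - 1) (t - 2) (by omega) (by omega),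
              gb_eq_zero_of_lt (by omega : x1 - 1 < t - 2), mul_zero]
          rw [hz2, f2, mul_zero, if_neg (fun h => hdn h.2)]
      · rw [F0 hdk, zero_mul, if_neg (fun h => hdk h.1)]
  · -- part 4
    by_cases hk1 : k ≤ 1
    · have hgz : gbZ (n - 2) ((k : ℤ) - 2) ω = 0 := by
        rw [gbZ, if_neg (by omega)]
      rw [hgz, mul_zero]
      split_ifs with hcond
      · have hj0 : j = 0 := by
          have hk0 : k = 0 := by
            rcases hcond with ⟨hdk, _⟩
            rcases Nat.eq_zero_or_pos k with h | h
            · exact h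
            · have := Nat.le_of_dvd h hdk; omega
          rw [hj, hk0, Nat.zero_div]
        have hcz : chooseZ (n / t - 1) ((j : ℤ) - 1) = 0 := by
          rw [chooseZ, if_neg (by omega)]
        rw [hcast, hcz, mul_zero, Nat.cast_zero]
      · rfl
    · -- k ≥ 2
      have hz2 : gbZ (n - 2) ((k : ℤ) - 2) ω = gb (n - 2) (k - 2) ω := by
        rw [gbZ, if_pos (by omega)]
        congr 1
        omega
      by_cases hdk : t ∣ k
      · have hr0 : r = 0 := hdvd_iff.mp hdk
        have hj1 : 1 ≤ j := by
          rcases Nat.eq_zero_or_pos j with h | h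
          · rw [h, mul_zero] at hkeq; omega
          · exact h
        have htc : t * (j - 1) + t = t * j := by
          have h3 : t * (j - 1) + t = t * (j - 1 + 1) := by ring
          rw [h3, (by omega : j - 1 + 1 = j)]
        have e_k2 : k - 2 = t * (j - 1) + (t - 2) := by omega
        have htq : t * (q1 + 1) = t * q1 + t := by ring
        have e_f : s * (n - 1) + k - 1 = t * (c + j - 1) + (t - 2) := by omega
        have f1 : gb (s * (n - 1) + k - 1) k ω = (((c + j - 1).choose j : ℕ) : ℂ) := by
          rw [e_f, (by omega : k = t * j + 0), QL (c + j - 1) (t - 2) j 0 (by omega) (by omega),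
            gb_zero_right, mul_one]
        by_cases hdn : t ∣ n
        · have hx1top : x1 = t - 1 := by
            by_contra hcon
            have e : n = t * q1 + (x1 + 1) := by omega
            have h5 : n % t = x1 + 1 := by rw [e, tmod_helper ht0 _ _ (by omega)]
            have h0 : n % t = 0 := Nat.mod_eq_zero_of_dvd hdn
            omega
          have hndiv : n / t = q1 + 1 := by
            rw [(by omega : n = t * (q1 + 1) + 0), tdiv_helper ht0 _ 0 ht0]
          have e_n2 : n - 2 = t * q1 + (t - 2) := by omega
          have f2 : gb (n - 2) (k - 2) ω = ((q1.choose (j - 1) : ℕ) : ℂ) := by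
            rw [e_n2, e_k2, QL q1 (t - 2) (j - 1) (t - 2) (by omega) (by omega),
              gb_self, mul_one]
          have hchz : chooseZ (n / t - 1) ((j : ℤ) - 1) = q1.choose (j - 1) := by
            rw [hndiv, chooseZ, if_pos (by omega)]
            congr 1 <;> omega
          rw [hz2, f1, f2, if_pos ⟨hdk, hdn⟩, hdiv1 hdk, hcast, hchz]
          push_cast
          ring
        · have hx1ne : x1 ≠ t - 1 := by
            intro hcon
            exact hdn ⟨q1 + 1, by omega⟩
          have e_n2 : n - 2 = t * q1 + (x1 - 1) := by omega
          have f2 : gb (n - 2) (k - 2) ω = 0 := by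
            rw [e_n2, e_k2, QL q1 (x1 - 1) (j - 1) (t - 2) (by omega) (by omega),
              gb_eq_zero_of_lt (by omega : x1 - 1 < t - 2), mul_zero]
          rw [hz2, f2, mul_zero, if_neg (fun h => hdn h.2)]
      · -- t ∤ k
        have hr1 : 1 ≤ r := by
          rcases Nat.eq_zero_or_pos r with h | h
          · exact absurd (hdvd_iff.mpr h) hdk
          · exact h
        by_cases hre : r = 1
        · have hj1 : 1 ≤ j := by
            rcases Nat.eq_zero_or_pos j with h | h
            · rw [h, mul_zero] at hkeq; omega
            · exact h
          have htc : t * (j - 1) + t = t * j := by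
            have h3 : t * (j - 1) + t = t * (j - 1 + 1) := by ring
            rw [h3, (by omega : j - 1 + 1 = j)]
          have e_k2 : k - 2 = t * (j - 1) + (t - 1) := by omega
          have e_n2 : n - 2 = t * q1 + (x1 - 1) := by omega
          have f2 : gb (n - 2) (k - 2) ω = 0 := by
            rw [e_n2, e_k2, QL q1 (x1 - 1) (j - 1) (t - 1) (by omega) (by omega),
              gb_eq_zero_of_lt (by omega : x1 - 1 < t - 1), mul_zero]
          rw [hz2, f2, mul_zero, if_neg (fun h => hdk h.1)]
        · have e_f : s * (n - 1) + k - 1 = t * (c + j) + (r - 2) := by omega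
          have f1 : gb (s * (n - 1) + k - 1) k ω = 0 := by
            rw [e_f, hkeq, QL (c + j) (r - 2) j r (by omega) hrt,
              gb_eq_zero_of_lt (by omega : r - 2 < r), mul_zero]
          rw [f1, zero_mul, if_neg (fun h => hdk h.1)]
end
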